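/- Let T be a ν-tree and A ⊆ T a set of ascents of T. Then the multiset of roots {r(T,a) : a ∈ A} is linearly independent in ℝ^{n+1}. -/

import Mathlib

open scoped Classical

/-- Number of east steps (`false`) among the first `k` steps of the lattice path `ν`
(`true` = north step N, `false` = east step E). -/
def ecount (ν : List Bool) (k : ℕ) : ℕ := (ν.take k).count false

/-- Number of north steps (`true`) among the first `k` steps of `ν`. -/
def ncount (ν : List Bool) (k : ℕ) : ℕ := (ν.take k).count true

/-- The set `A_ν` of lattice points weakly above `ν` inside the smallest rectangle
containing `ν` (the lattice points of the Ferrers diagram `F_ν`). -/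
def Anu (ν : List Bool) : Set (ℤ × ℤ) :=
  {p | ∃ k ≤ ν.length, p.1 = (ecount ν k : ℤ) ∧ (ncount ν k : ℤ) ≤ p.2 ∧ p.2 ≤ (ν.count true : ℤ)}

/-- `p` is strictly southwest of `q`. -/
def strictSW (p q : ℤ × ℤ) : Prop := p.1 < q.1 ∧ p.2 < q.2

/-- The lattice points of the smallest axis-parallel rectangle containing `p` and `q`. -/
def rectPts (p q : ℤ × ℤ) : Set (ℤ × ℤ) :=
  {z | min p.1 q.1 ≤ z.1 ∧ z.1 ≤ max p.1 q.1 ∧ min p.2 q.2 ≤ z.2 ∧ z.2 ≤ max p.2 q.2}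

/-- `p` and `q` are ν-incompatible: one is strictly southwest (equivalently, the other is
strictly northeast) of the other and the rectangle they span lies inside `F_ν`. -/
def NuIncompatible (ν : List Bool) (p q : ℤ × ℤ) : Prop :=
  (strictSW p q ∨ strictSW q p) ∧ rectPts p q ⊆ Anu ν

/-- `p` and `q` are ν-compatible. -/
def NuCompatible (ν : List Bool) (p q : ℤ × ℤ) : Prop := ¬ NuIncompatible ν p q

/-- A ν-tree: a maximal collection of pairwise ν-compatible elements of `A_ν`. -/
def IsNuTree (ν : List Bool) (T : Set (ℤ × ℤ)) : Prop :=
  T ⊆ Anu ν ∧ (∀ p ∈ T, ∀ q ∈ T, NuCompatible ν p q) ∧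
    ∀ T', T ⊆ T' → T' ⊆ Anu ν → (∀ p ∈ T', ∀ q ∈ T', NuCompatible ν p q) → T' = T

/-- In the pipe dream `P(T)`, the tile at cell `c` is an elbow iff `c` is a node of `T`
or `c` lies outside the Ferrers diagram `F_ν`; all other tiles are crossings. -/
def tileElbow (ν : List Bool) (T : Set (ℤ × ℤ)) (c : ℤ × ℤ) : Prop := c ∈ T ∨ c ∉ Anu ν

/-- One step of a pipe in the pipe dream `P(T)`.  A state `(c, d)` records the cell `c`
currently being traversed together with the heading `d` (`true` = east, `false` = north)
with which the pipe entered `c`.  An elbow turns the pipe, a crossing lets it through. -/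
noncomputable def pstep (ν : List Bool) (T : Set (ℤ × ℤ)) :
    (ℤ × ℤ) × Bool → (ℤ × ℤ) × Bool := fun s =>
  let d' : Bool := if tileElbow ν T s.1 then !s.2 else s.2
  (cond d' (s.1.1 + 1, s.1.2) (s.1.1, s.1.2 + 1), d')

/-- The trajectory of pipe `i` in `P(T)`: pipes are labeled (from `0`) from top to bottom
on the left edge, pipe `i` entering the leftmost column heading east at height
`(#north steps of ν) - i`. -/
noncomputable def ptraj (ν : List Bool) (T : Set (ℤ × ℤ)) (i : ℕ) (k : ℕ) :
    (ℤ × ℤ) × Bool :=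
  (pstep ν T)^[k] (((0 : ℤ), (ν.count true : ℤ) - (i : ℤ)), true)

/-- Pipe `i` passes above the lattice point `p` (with the Ferrers diagram shifted by
`-(ε,ε)`): the unique cell of the column of `p` that the pipe traverses heading east is
weakly above `p`. -/
def PipeAbove (ν : List Bool) (T : Set (ℤ × ℤ)) (i : ℕ) (p : ℤ × ℤ) : Prop :=
  ∃ k, (ptraj ν T i k).2 = true ∧ (ptraj ν T i k).1.1 = p.1 ∧ p.2 ≤ (ptraj ν T i k).1.2

/-- Pipe `i` passes (strictly) below the lattice point `p`. -/
def PipeBelow (ν : List Bool) (T : Set (ℤ × ℤ)) (i : ℕ) (p : ℤ × ℤ) : Prop :=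
  ∃ k, (ptraj ν T i k).2 = true ∧ (ptraj ν T i k).1.1 = p.1 ∧ (ptraj ν T i k).1.2 < p.2

/-- Pipe `i` enters the cell `c` heading east. -/
def EntersE (ν : List Bool) (T : Set (ℤ × ℤ)) (i : ℕ) (c : ℤ × ℤ) : Prop :=
  ∃ k, ptraj ν T i k = (c, true)

/-- Pipe `i` enters the cell `c` heading north. -/
def EntersN (ν : List Bool) (T : Set (ℤ × ℤ)) (i : ℕ) (c : ℤ × ℤ) : Prop :=
  ∃ k, ptraj ν T i k = (c, false)

/-- An ascent of a ν-tree `T`: a node having a node of `T` to its north and a node of `T`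
to its east. -/
def IsAscent (ν : List Bool) (T : Set (ℤ × ℤ)) (a : ℤ × ℤ) : Prop :=
  a ∈ T ∧ (∃ p ∈ T, p.1 = a.1 ∧ a.2 < p.2) ∧ (∃ r ∈ T, r.2 = a.2 ∧ a.1 < r.1)

/-!
Write `r(T,a) = e_{I a} - e_{J a}`, where `J a` is the pipe entering the elbow at `a` from the
south. After turning east at an ascent `a`, that pipe runs along the row of `a` to the next node,
turns north there and leaves `F_ν` through its top edge without meeting another node: a node in
that column would be ν-incompatible with `a`. Hence `J` is injective on ascents, and an ascent
that the pipe `J a` enters from the west lies in a lower row than `a`, or in the same row further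
east. For a combination of roots that vanishes, the coordinate `J a` at the minimal `a` of its
support in this order only sees `r(T,a)`, so the coefficient of `a` is zero.
-/

open Finset in
theorem linearIndependent_single_sub_single {ι κ R α : Type*} [Ring R] [DecidableEq κ]
    [LinearOrder α] {I J : ι → κ} (key : ι → α) (hJ : Function.Injective J)
    (hlt : ∀ a b, I b = J a → key b < key a) :
    LinearIndependent R fun b => (Pi.single (I b) 1 - Pi.single (J b) 1 : κ → R) := by
  rw [linearIndependent_iff']
  intro s g hsum
  by_contra! hne
  obtain ⟨i, his, hgi⟩ := hne
  -- The coordinate `J a` of a key-minimal `a` in the support sees only the term of `a`.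
  obtain ⟨a, ha, hmin⟩ :=
    (s.filter (g · ≠ 0)).exists_min_image key ⟨i, mem_filter.2 ⟨his, hgi⟩⟩
  rw [mem_filter] at ha
  have hIa : I a ≠ J a := fun h => (hlt a a h).false
  have hcoord :
      ∑ b ∈ s, g b * (Pi.single (I b) 1 - Pi.single (J b) 1 : κ → R) (J a) = -g a := by
    rw [sum_eq_single_of_mem a ha.1]
    · simp [hIa]
    · intro b hb hba
      by_cases hgb : g b = 0
      · simp [hgb]
      have hIb : I b ≠ J a := fun h => (hmin b (mem_filter.2 ⟨hb, hgb⟩)).not_gt (hlt a b h)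
      simp [hIb, hJ.ne hba]
  have hsum_Ja := congrFun hsum (J a)
  simp only [Finset.sum_apply, Pi.smul_apply, smul_eq_mul, Pi.zero_apply] at hsum_Ja
  exact ha.2 (neg_eq_zero.1 (hcoord.symm.trans hsum_Ja))

section Anu

variable (ν : List Bool)

theorem ncount_mono : Monotone (ncount ν) := fun k k' h => by
  unfold ncount
  rw [← min_eq_left h, ← List.take_take]
  exact (List.take_sublist _ _).count_le true

theorem ecount_succ_le (k : ℕ) : ecount ν (k + 1) ≤ ecount ν k + 1 := by
  unfold ecount
  rw [List.take_add_one, List.count_append]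
  have : (ν[k]?.toList).count false ≤ 1 := by
    cases ν[k]? <;> simp [List.count_singleton, apply_ite (· ≤ 1)]
  omega

theorem exists_le_ecount_eq {k m : ℕ} (h : m ≤ ecount ν k) : ∃ k' ≤ k, ecount ν k' = m := by
  induction k with
  | zero => exact ⟨0, le_rfl, by simp_all [ecount]⟩
  | succ k ih =>
    by_cases hm : m ≤ ecount ν k
    · obtain ⟨k', hk', he⟩ := ih hm
      exact ⟨k', hk'.trans k.le_succ, he⟩
    · exact ⟨k + 1, le_rfl, by have := ecount_succ_le ν k; omega⟩

variable {ν}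

theorem fst_nonneg_of_mem_Anu {p : ℤ × ℤ} (h : p ∈ Anu ν) : 0 ≤ p.1 := by
  obtain ⟨k, -, he, -⟩ := h
  rw [he]
  positivity

theorem snd_le_of_mem_Anu {p : ℤ × ℤ} (h : p ∈ Anu ν) : p.2 ≤ (ν.count true : ℤ) :=
  h.choose_spec.2.2.2

theorem mem_Anu_above {x y y' : ℤ} (h : (x, y) ∈ Anu ν) (hy : y ≤ y')
    (hy' : y' ≤ (ν.count true : ℤ)) : (x, y') ∈ Anu ν := by
  obtain ⟨k, hk, he, hn, -⟩ := h
  exact ⟨k, hk, he, hn.trans hy, hy'⟩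

theorem mem_Anu_left {x x' y : ℤ} (h : (x, y) ∈ Anu ν) (hx' : 0 ≤ x') (hx : x' ≤ x) :
    (x', y) ∈ Anu ν := by
  obtain ⟨k, hk, he, hn, hy⟩ := h
  obtain ⟨k', hk', he'⟩ := exists_le_ecount_eq ν (k := k) (m := x'.toNat) (by simp at he; omega)
  have := ncount_mono ν hk'
  exact ⟨k', hk'.trans hk, by simp [he', hx'], by simp at hn ⊢; omega, hy⟩

-- The whole rectangle lies in `F_ν` as soon as its southeast corner does.
theorem not_mem_of_strictSW_of_corner_mem {T : Set (ℤ × ℤ)} (hT : IsNuTree ν T)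
    {a d : ℤ × ℤ} (ha : a ∈ T) (h : strictSW a d) (hcorner : (d.1, a.2) ∈ Anu ν) :
    d ∉ T := by
  intro hd
  refine hT.2.1 a ha d hd ⟨Or.inl h, ?_⟩
  rintro ⟨x, y⟩ ⟨hx, hx', hy, hy'⟩
  simp only [min_eq_left h.1.le, max_eq_right h.1.le, min_eq_left h.2.le,
    max_eq_right h.2.le] at hx hx' hy hy'
  have hxA : (x, a.2) ∈ Anu ν :=
    mem_Anu_left hcorner ((fst_nonneg_of_mem_Anu (hT.1 ha)).trans hx) hx'
  exact mem_Anu_above hxA hy (hy'.trans (snd_le_of_mem_Anu (hT.1 hd)))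

end Anu

section Pipes

variable {ν : List Bool} {T : Set (ℤ × ℤ)}

theorem tileElbow_of_mem {c : ℤ × ℤ} (h : c ∈ T) : tileElbow ν T c := Or.inl h

theorem pstep_east (c : ℤ × ℤ) :
    pstep ν T (c, true) =
      if tileElbow ν T c then ((c.1, c.2 + 1), false) else ((c.1 + 1, c.2), true) := by
  unfold pstep
  split_ifs <;> simp [*]

theorem pstep_north (c : ℤ × ℤ) :
    pstep ν T (c, false) =
      if tileElbow ν T c then ((c.1 + 1, c.2), true) else ((c.1, c.2 + 1), false) := by
  unfold pstep
  split_ifs <;> simp [*]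

theorem snd_le_pstep_snd (s : (ℤ × ℤ) × Bool) : s.1.2 ≤ (pstep ν T s).1.2 := by
  obtain ⟨c, _ | _⟩ := s
  · rw [pstep_north]; split_ifs <;> simp
  · rw [pstep_east]; split_ifs <;> simp

theorem ptraj_succ (q k : ℕ) : ptraj ν T q (k + 1) = pstep ν T (ptraj ν T q k) :=
  Function.iterate_succ_apply' _ _ _

theorem monotone_ptraj_snd (q : ℕ) : Monotone fun k => (ptraj ν T q k).1.2 :=
  monotone_nat_of_le_succ fun k => by
    simp only [ptraj_succ]
    exact snd_le_pstep_snd _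

theorem exists_first_node_east {a r : ℤ × ℤ} (hr : r ∈ T) (hr2 : r.2 = a.2) (hr1 : a.1 < r.1) :
    ∃ xc, a.1 < xc ∧ (xc, a.2) ∈ T ∧ ∀ x, a.1 < x → x < xc → (x, a.2) ∉ T := by
  obtain ⟨xc, ⟨hac, hcT⟩, hmin⟩ := Int.exists_least_of_bdd
    (P := fun x => a.1 < x ∧ (x, a.2) ∈ T) ⟨a.1, fun _ hz => hz.1.le⟩
    ⟨r.1, hr1, by rw [← hr2]; exact hr⟩
  exact ⟨xc, hac, hcT, fun x hax hxc hxT => (hmin x ⟨hax, hxT⟩).not_gt hxc⟩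

-- `xc` is the column of the next node east of `a` in its row.
def ExitRoute (ν : List Bool) (a : ℤ × ℤ) (xc : ℤ) (s : (ℤ × ℤ) × Bool) : Prop :=
  (∃ x, a.1 < x ∧ x ≤ xc ∧ s = ((x, a.2), true)) ∨ (∃ y, a.2 < y ∧ s = ((xc, y), false)) ∨
    (ν.count true : ℤ) < s.1.2

theorem exitRoute_pstep (hT : IsNuTree ν T) {a : ℤ × ℤ} {xc : ℤ} (ha : a ∈ T)
    (hac : a.1 < xc) (hcT : (xc, a.2) ∈ T) (hgap : ∀ x, a.1 < x → x < xc → (x, a.2) ∉ T)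
    {s : (ℤ × ℤ) × Bool} (hs : ExitRoute ν a xc s) : ExitRoute ν a xc (pstep ν T s) := by
  have hcA := hT.1 hcT
  rcases hs with ⟨x, hax, hxc, rfl⟩ | ⟨y, hay, rfl⟩ | htop
  · rw [pstep_east]
    rcases hxc.lt_or_eq with hxc | rfl
    · have hcross : ¬ tileElbow ν T (x, a.2) := by
        rintro (hxT | hxA)
        · exact hgap x hax hxc hxT
        · exact hxA (mem_Anu_left hcA ((fst_nonneg_of_mem_Anu (hT.1 ha)).trans hax.le) hxc.le)
      rw [if_neg hcross]
      exact Or.inl ⟨x + 1, by omega, by omega, rfl⟩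
    · rw [if_pos (tileElbow_of_mem hcT)]
      exact Or.inr (Or.inl ⟨a.2 + 1, by omega, rfl⟩)
  · by_cases hy : y ≤ (ν.count true : ℤ)
    · have hA : (xc, y) ∈ Anu ν := mem_Anu_above hcA hay.le hy
      have hcross : ¬ tileElbow ν T (xc, y) := by
        rintro (hT' | hA')
        · exact not_mem_of_strictSW_of_corner_mem hT ha ⟨hac, hay⟩ hcA hT'
        · exact hA' hA
      rw [pstep_north, if_neg hcross]
      exact Or.inr (Or.inl ⟨y + 1, by omega, rfl⟩)
    · exact Or.inr (Or.inr ((not_le.1 hy).trans_le (snd_le_pstep_snd _)))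
  · exact Or.inr (Or.inr (htop.trans_le (snd_le_pstep_snd s)))

theorem ptraj_exitRoute (hT : IsNuTree ν T) {a : ℤ × ℤ} (ha : IsAscent ν T a) {q k₀ : ℕ}
    (hk₀ : ptraj ν T q k₀ = (a, false)) :
    ∃ xc, a.1 < xc ∧ (xc, a.2) ∈ T ∧ ∀ k, k₀ < k → ExitRoute ν a xc (ptraj ν T q k) := by
  obtain ⟨haT, -, r, hrT, hr2, hr1⟩ := ha
  obtain ⟨xc, hac, hcT, hgap⟩ := exists_first_node_east hrT hr2 hr1
  refine ⟨xc, hac, hcT, fun k hk => ?_⟩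
  replace hk := Nat.succ_le_of_lt hk
  induction k, hk using Nat.le_induction with
  | base =>
    rw [ptraj_succ, hk₀, pstep_north, if_pos (tileElbow_of_mem haT)]
    exact Or.inl ⟨a.1 + 1, by omega, by omega, rfl⟩
  | succ k _ ih =>
    rw [ptraj_succ]
    exact exitRoute_pstep hT haT hac hcT hgap ih

theorem ptraj_ne_north_of_lt (hT : IsNuTree ν T) {a b : ℤ × ℤ} (ha : IsAscent ν T a)
    (hb : b ∈ T) {q k₀ k : ℕ} (hk₀ : ptraj ν T q k₀ = (a, false)) (hk : k₀ < k) :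
    ptraj ν T q k ≠ (b, false) := by
  obtain ⟨xc, hac, hcT, hroute⟩ := ptraj_exitRoute hT ha hk₀
  intro hkb
  rcases hroute k hk with ⟨x, -, -, h⟩ | ⟨y, hay, h⟩ | htop
  · simp [hkb] at h
  · obtain ⟨rfl, -⟩ := Prod.mk.inj (hkb.symm.trans h)
    exact not_mem_of_strictSW_of_corner_mem hT ha.1 ⟨hac, hay⟩ (hT.1 hcT) hb
  · rw [hkb] at htop
    exact htop.not_ge (snd_le_of_mem_Anu (hT.1 hb))

theorem eq_of_entersN (hT : IsNuTree ν T) {a b : ℤ × ℤ} (ha : IsAscent ν T a)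
    (hb : IsAscent ν T b) {q : ℕ} (hqa : EntersN ν T q a) (hqb : EntersN ν T q b) : a = b := by
  obtain ⟨k, hk⟩ := hqa
  obtain ⟨k', hk'⟩ := hqb
  rcases lt_trichotomy k k' with h | rfl | h
  · exact absurd hk' (ptraj_ne_north_of_lt hT ha hb.1 hk h)
  · simpa using hk.symm.trans hk'
  · exact absurd hk (ptraj_ne_north_of_lt hT hb ha.1 hk' h)

-- `toLex (p.2, -p.1)` orders nodes by row, then from east to west.
theorem toLex_lt_of_entersE_of_entersN (hT : IsNuTree ν T) {a b : ℤ × ℤ}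
    (ha : IsAscent ν T a) (hb : b ∈ T) {q : ℕ} (hqa : EntersN ν T q a)
    (hqb : EntersE ν T q b) : toLex (b.2, -b.1) < toLex (a.2, -a.1) := by
  obtain ⟨k₀, hk₀⟩ := hqa
  obtain ⟨k, hk⟩ := hqb
  rw [Prod.Lex.toLex_lt_toLex]
  rcases lt_or_ge k₀ k with hlt | hle
  · obtain ⟨xc, -, -, hroute⟩ := ptraj_exitRoute hT ha hk₀
    rcases hroute k hlt with ⟨x, hax, -, h⟩ | ⟨y, -, h⟩ | htop
    · obtain ⟨rfl, -⟩ := Prod.mk.inj (hk.symm.trans h)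
      exact Or.inr ⟨rfl, by simpa using hax⟩
    · simp [hk] at h
    · rw [hk] at htop
      exact absurd (snd_le_of_mem_Anu (hT.1 hb)) htop.not_ge
  · rcases hle.lt_or_eq with hlt | rfl
    · have hy : (ptraj ν T q (k + 1)).1.2 ≤ (ptraj ν T q k₀).1.2 :=
        monotone_ptraj_snd q (Nat.succ_le_of_lt hlt)
      rw [ptraj_succ, hk, pstep_east, if_pos (tileElbow_of_mem hb), hk₀] at hy
      exact Or.inl (by simp only at hy; omega)
    · simp [hk] at hk₀

end Pipes

theorem ascent_roots_linearIndependent_general (ν : List Bool) (T : Set (ℤ × ℤ))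
    (hT : IsNuTree ν T) (N : ℕ) (A : Set (ℤ × ℤ))
    (hAsc : ∀ a ∈ A, IsAscent ν T a)
    (ρ : A → (Fin N → ℝ))
    (hρ : ∀ a : A, ∃ i j : Fin N, EntersE ν T (i : ℕ) a ∧ EntersN ν T (j : ℕ) a ∧
      ρ a = Pi.single i (1 : ℝ) - Pi.single j 1) :
    LinearIndependent ℝ ρ := by
  choose I J hI hJ hρI using hρ
  rw [show ρ = fun a => Pi.single (I a) 1 - Pi.single (J a) 1 from funext hρI]
  refine linearIndependent_single_sub_single (fun a : A => toLex ((a : ℤ × ℤ).2, -(a : ℤ × ℤ).1))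
    (fun a b hab => ?_) (fun a b hab => ?_)
  · exact Subtype.ext <| eq_of_entersN hT (hAsc a a.2) (hAsc b b.2) (hJ a) (hab ▸ hJ b)
  · exact toLex_lt_of_entersE_of_entersN hT (hAsc a a.2) (hAsc b b.2).1 (hJ a) (hab ▸ hI b)

/-- for a ν-tree `T` and a set `A ⊆ T` of ascents of `T`, the roots
`r(T,a) = e_i - e_j` (where `i`, `j` are the two pipes forming the elbow of `P(T)` at
`a`) for `a ∈ A` are linearly independent in `ℝ^N`. -/
theorem ascent_roots_linearIndependent (ν : List Bool) (T : Set (ℤ × ℤ))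
    (hT : IsNuTree ν T) (N : ℕ) (A : Set (ℤ × ℤ)) (hAT : A ⊆ T)
    (hAsc : ∀ a ∈ A, IsAscent ν T a)
    (ρ : A → (Fin N → ℝ))
    (hρ : ∀ a : A, ∃ i j : Fin N, EntersE ν T (i : ℕ) a ∧ EntersN ν T (j : ℕ) a ∧
      ρ a = Pi.single i (1 : ℝ) - Pi.single j 1) :
    LinearIndependent ℝ ρ :=
  ascent_roots_linearIndependent_general ν T hT N A hAsc ρ hρ
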